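/- If A ∈ C^{m×N} has the RIPL of order (2s,M) with restricted isometry constant in levels δ_{2s,M} < 1/(√(2ζ/ξ) + 1), then A satisfies the weighted robust null space property in levels of order (s,M): there exist constants 0 < ρ < 1 and γ > 0 such that for all x ∈ C^N and every (s,M)-sparse index set Δ, ‖P_Δ x‖₂ ≤ ρ ‖P_{Δ^c} x‖_{ℓ¹_w} / √ζ + γ ‖Ax‖₂. In particular one can take ρ = √2 · (δ/(1−δ)) · √(ζ/ξ) and γ = √(1+δ)/(1−δ) with δ = δ_{2s,M}. -/

import Mathlib

noncomputable section

open scoped BigOperators Classical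

namespace SIL

/-- The index set of level `k` (0-indexed): indices `i` with `M k ≤ i < M (k+1)`. -/
def level (N : ℕ) (M : ℕ → ℕ) (k : ℕ) : Finset (Fin N) :=
  Finset.univ.filter fun i => M k ≤ (i : ℕ) ∧ (i : ℕ) < M (k + 1)

/-- Validity of the sparsity levels `0 = M₀ < M₁ < ⋯ < M_r = N`. -/
def LevelsOK (N r : ℕ) (M : ℕ → ℕ) : Prop :=
  M 0 = 0 ∧ M r = N ∧ ∀ k < r, M k < M (k + 1)

/-- Support of a vector, as a finset. -/
def supp {N : ℕ} (x : Fin N → ℂ) : Finset (Fin N) :=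
  Finset.univ.filter fun i => x i ≠ 0

/-- An `(s,M)`-sparse index set: at most `s k` indices in each level `k`. -/
def SparseSet (N r : ℕ) (M s : ℕ → ℕ) (Δ : Finset (Fin N)) : Prop :=
  ∀ k < r, (Δ ∩ level N M k).card ≤ s k

/-- An `(s,M)`-sparse in levels vector. -/
def Sparse {N : ℕ} (r : ℕ) (M s : ℕ → ℕ) (x : Fin N → ℂ) : Prop :=
  SparseSet N r M s (supp x)

/-- Squared ℓ² norm. -/
def n2sq {ι : Type*} [Fintype ι] (x : ι → ℂ) : ℝ := ∑ i, ‖x i‖ ^ 2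

/-- ℓ² norm. -/
def n2 {ι : Type*} [Fintype ι] (x : ι → ℂ) : ℝ := Real.sqrt (n2sq x)

/-- Weighted ℓ¹ norm. -/
def wn1 {ι : Type*} [Fintype ι] (w : ι → ℝ) (x : ι → ℂ) : ℝ := ∑ i, w i * ‖x i‖

/-- Standard inner product `⟨x,y⟩ = ∑ xᵢ conj(yᵢ)`. -/
def inr {ι : Type*} [Fintype ι] (x y : ι → ℂ) : ℂ := ∑ i, x i * star (y i)

/-- Coordinate projection onto an index set. -/
def proj {N : ℕ} (Δ : Finset (Fin N)) (x : Fin N → ℂ) : Fin N → ℂ :=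
  fun i => if i ∈ Δ then x i else 0

/-- The two-sided restricted isometry-in-levels inequality with constant `δ`. -/
def RIPBound {m N : ℕ} (A : Matrix (Fin m) (Fin N) ℂ) (r : ℕ) (M s : ℕ → ℕ) (δ : ℝ) : Prop :=
  ∀ x : Fin N → ℂ, Sparse r M s x →
    (1 - δ) * n2sq x ≤ n2sq (A.mulVec x) ∧ n2sq (A.mulVec x) ≤ (1 + δ) * n2sq x

/-- The restricted isometry constant in levels `δ_{s,M}`: the smallest `δ ≥ 0`
satisfying the RIP-in-levels inequalities. -/
def ricl {m N : ℕ} (A : Matrix (Fin m) (Fin N) ℂ) (r : ℕ) (M s : ℕ → ℕ) : ℝ :=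
  sInf {δ : ℝ | 0 ≤ δ ∧ RIPBound A r M s δ}

/-- Best `(s,M)`-term approximation error in the weighted ℓ¹ norm. -/
def bestApprox {N : ℕ} (r : ℕ) (M s : ℕ → ℕ) (w : Fin N → ℝ) (x : Fin N → ℂ) : ℝ :=
  sInf {t : ℝ | ∃ z : Fin N → ℂ, Sparse r M s z ∧ t = wn1 w (x - z)}

/-- `ζ = ∑ₖ (w^{(k)})² sₖ`. -/
def zeta (r : ℕ) (s : ℕ → ℕ) (wl : ℕ → ℝ) : ℝ :=
  ∑ k ∈ Finset.range r, wl k ^ 2 * (s k : ℝ)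

/-- `ξ = minₖ (w^{(k)})² sₖ`. -/
def xiMin (r : ℕ) (s : ℕ → ℕ) (wl : ℕ → ℝ) : ℝ :=
  if h : (Finset.range r).Nonempty then (Finset.range r).inf' h fun k => wl k ^ 2 * (s k : ℝ)
  else 0

/-- `T` is a set collecting, within each level `k`, (the indices of) `s k`
largest-in-absolute-value entries of `z` (or all of the level if it is smaller). -/
def IsTopSet {N : ℕ} (r : ℕ) (M s : ℕ → ℕ) (z : Fin N → ℂ) (T : Finset (Fin N)) : Prop :=
  (∀ k < r, (T ∩ level N M k).card = min (s k) (level N M k).card) ∧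
  (∀ k < r, ∀ i ∈ T ∩ level N M k, ∀ j ∈ level N M k \ T, ‖z j‖ ≤ ‖z i‖)

/-- `h` is a hard thresholding in levels `H_{s,M}(z)` of `z`. -/
def IsThresh {N : ℕ} (r : ℕ) (M s : ℕ → ℕ) (z h : Fin N → ℂ) : Prop :=
  ∃ T : Finset (Fin N), IsTopSet r M s z T ∧ h = proj T z

/-- `X` is a sequence of IHTL iterates with data `(A, y)` and sparsities `(s, M)`. -/
def IHTLSeq {m N : ℕ} (A : Matrix (Fin m) (Fin N) ℂ) (r : ℕ) (M s : ℕ → ℕ)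
    (y : Fin m → ℂ) (X : ℕ → Fin N → ℂ) : Prop :=
  ∀ n, IsThresh r M s (X n + A.conjTranspose.mulVec (y - A.mulVec (X n))) (X (n + 1))

/-- `X` is a sequence of CoSaMPL iterates with data `(A, y)` and sparsities `(s, M)`. -/
def CoSaMPLSeq {m N : ℕ} (A : Matrix (Fin m) (Fin N) ℂ) (r : ℕ) (M s : ℕ → ℕ)
    (y : Fin m → ℂ) (X : ℕ → Fin N → ℂ) : Prop :=
  ∀ n, ∃ (T : Finset (Fin N)) (u : Fin N → ℂ),
    IsTopSet r M (fun k => 2 * s k) (A.conjTranspose.mulVec (y - A.mulVec (X n))) T ∧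
    supp u ⊆ supp (X n) ∪ T ∧
    (∀ z : Fin N → ℂ, supp z ⊆ supp (X n) ∪ T → n2 (y - A.mulVec u) ≤ n2 (y - A.mulVec z)) ∧
    IsThresh r M s u (X (n + 1))

section Aux
variable {ι : Type*} [Fintype ι]

lemma n2sq_nonneg (x : ι → ℂ) : 0 ≤ n2sq x :=
  Finset.sum_nonneg fun i _ => by positivity

lemma n2_nonneg (x : ι → ℂ) : 0 ≤ n2 x := Real.sqrt_nonneg _

lemma n2_sq (x : ι → ℂ) : n2 x ^ 2 = n2sq x := Real.sq_sqrt (n2sq_nonneg x)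

lemma n2sq_eq_zero {x : ι → ℂ} (h : n2sq x = 0) : x = 0 := by
  funext i
  have := (Finset.sum_eq_zero_iff_of_nonneg (fun i _ => by positivity)).1 h i (Finset.mem_univ i)
  simpa using this

lemma inr_self_re (x : ι → ℂ) : (inr x x).re = n2sq x := by
  unfold inr n2sq
  rw [Complex.re_sum]
  refine Finset.sum_congr rfl fun i _ => ?_
  rw [show (star (x i)) = (starRingEnd ℂ) (x i) from rfl, Complex.mul_conj]
  simp [Complex.normSq_eq_norm_sq, ← Complex.ofReal_pow]

lemma norm_inr_le (x y : ι → ℂ) : ‖inr x y‖ ≤ n2 x * n2 y := by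
  have h := @norm_inner_le_norm ℂ (EuclideanSpace ℂ ι) _ _ _
    ((WithLp.equiv 2 _).symm y) ((WithLp.equiv 2 _).symm x)
  have h1 : (inner ℂ ((WithLp.equiv 2 (ι → ℂ)).symm y) ((WithLp.equiv 2 (ι → ℂ)).symm x) : ℂ) = inr x y := by
    rw [PiLp.inner_apply]
    unfold inr
    refine Finset.sum_congr rfl fun i _ => ?_
    simp [mul_comm]
  have h2 : ‖(WithLp.equiv 2 (ι → ℂ)).symm x‖ = n2 x := by
    rw [EuclideanSpace.norm_eq]; rfl
  have h3 : ‖(WithLp.equiv 2 (ι → ℂ)).symm y‖ = n2 y := by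
    rw [EuclideanSpace.norm_eq]; rfl
  rw [h1, h2, h3] at h
  calc ‖inr x y‖ ≤ n2 y * n2 x := h
  _ = n2 x * n2 y := mul_comm _ _

end Aux
section Aux2
variable {ι : Type*} [Fintype ι]

lemma inr_add_left (x y z : ι → ℂ) : inr (x + y) z = inr x z + inr y z := by
  unfold inr; rw [← Finset.sum_add_distrib]
  exact Finset.sum_congr rfl fun i _ => by simp [add_mul]

lemma inr_sub_left (x y z : ι → ℂ) : inr (x - y) z = inr x z - inr y z := by
  unfold inr; rw [← Finset.sum_sub_distrib]
  exact Finset.sum_congr rfl fun i _ => by simp [sub_mul]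

lemma inr_add_right (x y z : ι → ℂ) : inr x (y + z) = inr x y + inr x z := by
  unfold inr; rw [← Finset.sum_add_distrib]
  exact Finset.sum_congr rfl fun i _ => by simp [star_add, mul_add]

lemma inr_sub_right (x y z : ι → ℂ) : inr x (y - z) = inr x y - inr x z := by
  unfold inr; rw [← Finset.sum_sub_distrib]
  exact Finset.sum_congr rfl fun i _ => by simp [star_sub, mul_sub]

lemma inr_conj (x y : ι → ℂ) : inr y x = star (inr x y) := by
  unfold inr; rw [star_sum]
  exact Finset.sum_congr rfl fun i _ => by simp [mul_comm]

lemma inr_smul_left (c : ℂ) (x y : ι → ℂ) : inr (c • x) y = c * inr x y := by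
  unfold inr; rw [Finset.mul_sum]
  exact Finset.sum_congr rfl fun i _ => by simp [mul_assoc]

lemma inr_smul_right (c : ℂ) (x y : ι → ℂ) : inr x (c • y) = star c * inr x y := by
  unfold inr; rw [Finset.mul_sum]
  exact Finset.sum_congr rfl fun i _ => by simp; ring

lemma n2sq_add_eq (x y : ι → ℂ) : n2sq (x + y) = n2sq x + n2sq y + 2 * (inr x y).re := by
  have h : (inr (x+y) (x+y)).re = (inr x x).re + (inr y y).re + 2 * (inr x y).re := by
    rw [inr_add_left, inr_add_right, inr_add_right]
    have : inr y x = star (inr x y) := inr_conj x y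
    simp [this, Complex.add_re]
    ring
  rw [← inr_self_re, h, inr_self_re, inr_self_re]

lemma n2sq_sub_eq (x y : ι → ℂ) : n2sq (x - y) = n2sq x + n2sq y - 2 * (inr x y).re := by
  have h : (inr (x-y) (x-y)).re = (inr x x).re + (inr y y).re - 2 * (inr x y).re := by
    rw [inr_sub_left, inr_sub_right, inr_sub_right]
    have : inr y x = star (inr x y) := inr_conj x y
    simp [this, Complex.sub_re]
    ring
  rw [← inr_self_re, h, inr_self_re, inr_self_re]

lemma n2sq_smul (c : ℂ) (x : ι → ℂ) : n2sq (c • x) = ‖c‖ ^ 2 * n2sq x := by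
  unfold n2sq; rw [Finset.mul_sum]
  exact Finset.sum_congr rfl fun i _ => by simp [norm_mul]; ring

lemma n2_eq_zero {x : ι → ℂ} (h : n2 x = 0) : x = 0 := by
  apply n2sq_eq_zero
  have := n2_sq x
  rw [h] at this; simpa using this.symm

end Aux2

section Aux3
variable {N : ℕ}

lemma supp_add_subset (x y : Fin N → ℂ) : supp (x + y) ⊆ supp x ∪ supp y := by
  intro i hi
  rw [supp, Finset.mem_filter] at hi
  rw [Finset.mem_union]
  by_contra hc
  push_neg at hc
  simp only [supp, Finset.mem_filter, Finset.mem_univ, true_and, not_not] at hc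
  exact hi.2 (by simp [Pi.add_apply, hc.1, hc.2])

lemma supp_sub_subset (x y : Fin N → ℂ) : supp (x - y) ⊆ supp x ∪ supp y := by
  intro i hi
  rw [supp, Finset.mem_filter] at hi
  rw [Finset.mem_union]
  by_contra hc
  push_neg at hc
  simp only [supp, Finset.mem_filter, Finset.mem_univ, true_and, not_not] at hc
  exact hi.2 (by simp [Pi.sub_apply, hc.1, hc.2])

lemma supp_smul_subset (c : ℂ) (x : Fin N → ℂ) : supp (c • x) ⊆ supp x := by
  intro i hi
  simp only [supp, Finset.mem_filter, Finset.mem_univ, true_and] at *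
  intro h
  exact hi (by simp [h])

lemma supp_proj_subset (Δ : Finset (Fin N)) (x : Fin N → ℂ) : supp (proj Δ x) ⊆ Δ := by
  intro i hi
  simp only [supp, proj, Finset.mem_filter, Finset.mem_univ, true_and] at hi
  by_contra h
  simp [h] at hi

lemma sparse_mono {r : ℕ} {M t : ℕ → ℕ} {x : Fin N → ℂ} {Δ : Finset (Fin N)}
    (h : supp x ⊆ Δ) (hΔ : SparseSet N r M t Δ) : Sparse r M t x := fun k hk =>
  le_trans (Finset.card_le_card (Finset.inter_subset_inter h (le_refl _))) (hΔ k hk)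

lemma sparseSet_union {r : ℕ} {M s₁ s₂ : ℕ → ℕ} {Δ₁ Δ₂ : Finset (Fin N)}
    (h1 : SparseSet N r M s₁ Δ₁) (h2 : SparseSet N r M s₂ Δ₂) :
    SparseSet N r M (fun k => s₁ k + s₂ k) (Δ₁ ∪ Δ₂) := by
  intro k hk
  calc ((Δ₁ ∪ Δ₂) ∩ level N M k).card = ((Δ₁ ∩ level N M k) ∪ (Δ₂ ∩ level N M k)).card := by
        rw [Finset.union_inter_distrib_right]
  _ ≤ (Δ₁ ∩ level N M k).card + (Δ₂ ∩ level N M k).card := Finset.card_union_le _ _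
  _ ≤ s₁ k + s₂ k := add_le_add (h1 k hk) (h2 k hk)

lemma inr_eq_zero_of_disjoint {x y : Fin N → ℂ} {U V : Finset (Fin N)}
    (hu : supp x ⊆ U) (hv : supp y ⊆ V) (hUV : Disjoint U V) : inr x y = 0 := by
  unfold inr
  apply Finset.sum_eq_zero
  intro i _
  by_cases hx : x i = 0
  · simp [hx]
  · have hiU : i ∈ U := hu (by simp [supp, hx])
    have hiV : i ∉ V := fun hiV => (Finset.disjoint_left.1 hUV) hiU hiV
    have : y i = 0 := by
      by_contra hy
      exact hiV (hv (by simp [supp, hy]))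
    simp [this]

end Aux3
section Cross
variable {m N : ℕ} {A : Matrix (Fin m) (Fin N) ℂ} {r : ℕ} {M s : ℕ → ℕ} {δ : ℝ}

lemma cross_re_bound_raw (hδ : RIPBound A r M (fun k => 2 * s k) δ)
    {U V : Finset (Fin N)} (hU : SparseSet N r M s U) (hV : SparseSet N r M s V)
    (hUV : Disjoint U V) {u v : Fin N → ℂ} (hu : supp u ⊆ U) (hv : supp v ⊆ V) :
    |(inr (A.mulVec u) (A.mulVec v)).re| ≤ δ * ((n2sq u + n2sq v) / 2) := by
  have hUV2 : SparseSet N r M (fun k => 2 * s k) (U ∪ V) := by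
    intro k hk
    simpa [two_mul] using sparseSet_union hU hV k hk
  have hsum : Sparse r M (fun k => 2 * s k) (u + v) :=
    sparse_mono ((supp_add_subset u v).trans (Finset.union_subset_union hu hv)) hUV2
  have hsub : Sparse r M (fun k => 2 * s k) (u - v) :=
    sparse_mono ((supp_sub_subset u v).trans (Finset.union_subset_union hu hv)) hUV2
  have h1 := hδ (u + v) hsum
  have h2 := hδ (u - v) hsub
  have hiz : inr u v = 0 := inr_eq_zero_of_disjoint hu hv hUV
  have hS1 : n2sq (u + v) = n2sq u + n2sq v := by rw [n2sq_add_eq, hiz]; simp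
  have hS2 : n2sq (u - v) = n2sq u + n2sq v := by rw [n2sq_sub_eq, hiz]; simp
  have hA1 : n2sq (A.mulVec (u + v)) =
      n2sq (A.mulVec u) + n2sq (A.mulVec v) + 2 * (inr (A.mulVec u) (A.mulVec v)).re := by
    rw [Matrix.mulVec_add, n2sq_add_eq]
  have hA2 : n2sq (A.mulVec (u - v)) =
      n2sq (A.mulVec u) + n2sq (A.mulVec v) - 2 * (inr (A.mulVec u) (A.mulVec v)).re := by
    rw [Matrix.mulVec_sub, n2sq_sub_eq]
  rw [hS1] at h1
  rw [hS2] at h2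
  rw [hA1] at h1
  rw [hA2] at h2
  rw [abs_le]
  constructor <;> nlinarith [h1.1, h1.2, h2.1, h2.2]

lemma cross_re_bound (hδ : RIPBound A r M (fun k => 2 * s k) δ)
    {U V : Finset (Fin N)} (hU : SparseSet N r M s U) (hV : SparseSet N r M s V)
    (hUV : Disjoint U V) {u v : Fin N → ℂ} (hu : supp u ⊆ U) (hv : supp v ⊆ V) :
    |(inr (A.mulVec u) (A.mulVec v)).re| ≤ δ * (n2 u * n2 v) := by
  by_cases hu0 : n2 u = 0
  · have h0 : u = 0 := n2_eq_zero hu0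
    subst h0
    rw [Matrix.mulVec_zero]
    have : inr (0 : Fin m → ℂ) (A.mulVec v) = 0 := by unfold inr; simp
    rw [this, hu0]
    simp
  by_cases hv0 : n2 v = 0
  · have h0 : v = 0 := n2_eq_zero hv0
    subst h0
    rw [Matrix.mulVec_zero]
    have : inr (A.mulVec u) (0 : Fin m → ℂ) = 0 := by unfold inr; simp
    rw [this, hv0]
    simp
  have ha : 0 < n2 u := lt_of_le_of_ne (n2_nonneg u) (Ne.symm hu0)
  have hb : 0 < n2 v := lt_of_le_of_ne (n2_nonneg v) (Ne.symm hv0)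
  set t : ℝ := Real.sqrt (n2 v / n2 u) with ht
  have htpos : 0 < t := Real.sqrt_pos.2 (div_pos hb ha)
  have ht2 : t ^ 2 = n2 v / n2 u := Real.sq_sqrt (le_of_lt (div_pos hb ha))
  set u' : Fin N → ℂ := ((t : ℝ) : ℂ) • u with hu'
  set v' : Fin N → ℂ := ((t⁻¹ : ℝ) : ℂ) • v with hv'
  have hraw := cross_re_bound_raw hδ hU hV hUV
    ((supp_smul_subset _ u).trans hu) ((supp_smul_subset _ v).trans hv)
    (u := u') (v := v')
  have hAe : inr (A.mulVec u') (A.mulVec v') = inr (A.mulVec u) (A.mulVec v) := by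
    rw [hu', hv', Matrix.mulVec_smul, Matrix.mulVec_smul, inr_smul_left, inr_smul_right]
    have hst : star ((t⁻¹ : ℝ) : ℂ) = ((t⁻¹ : ℝ) : ℂ) := by
      simp [Complex.star_def, Complex.conj_ofReal]
    rw [hst, ← mul_assoc]
    have : ((t : ℝ) : ℂ) * ((t⁻¹ : ℝ) : ℂ) = 1 := by
      rw [← Complex.ofReal_mul, mul_inv_cancel₀ (ne_of_gt htpos)]
      simp
    rw [this, one_mul]
  have hn1 : n2sq u' = t ^ 2 * n2sq u := by
    rw [hu', n2sq_smul, Complex.norm_real]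
    congr 1
    rw [Real.norm_eq_abs, abs_of_pos htpos]
  have hn2 : n2sq v' = (t⁻¹) ^ 2 * n2sq v := by
    rw [hv', n2sq_smul, Complex.norm_real]
    congr 1
    rw [Real.norm_eq_abs, abs_of_pos (inv_pos.2 htpos)]
  rw [hAe, hn1, hn2] at hraw
  have hval : t ^ 2 * n2sq u = n2 u * n2 v := by
    rw [ht2, ← n2_sq u]
    field_simp
  have hval2 : (t⁻¹) ^ 2 * n2sq v = n2 u * n2 v := by
    rw [inv_pow, ht2, ← n2_sq v]
    rw [inv_div]
    field_simp
  rw [hval, hval2] at hraw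
  calc |(inr (A.mulVec u) (A.mulVec v)).re| ≤ δ * ((n2 u * n2 v + n2 u * n2 v) / 2) := hraw
  _ = δ * (n2 u * n2 v) := by ring

end Cross
section Ricl
variable {m N : ℕ}

lemma le_of_forall_eps {a b t : ℝ} (ht : 0 ≤ t) (h : ∀ ε > 0, a ≤ b + ε * t) : a ≤ b := by
  by_contra hc
  push_neg at hc
  rcases eq_or_lt_of_le ht with h0 | h0
  · have := h 1 one_pos
    rw [← h0] at this
    simp at this
    linarith
  · have := h ((a - b) / (2 * t)) (div_pos (by linarith) (by linarith))
    rw [div_mul_eq_mul_div, mul_comm] at this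
    have h2 : t * (a - b) / (2 * t) = (a - b) / 2 := by
      field_simp
    rw [h2] at this
    linarith

lemma mulVec_row_bound (A : Matrix (Fin m) (Fin N) ℂ) (x : Fin N → ℂ) (i : Fin m) :
    ‖A.mulVec x i‖ ≤ n2 (A i) * n2 x := by
  have h1 : A.mulVec x i = inr (A i) (fun j => star (x j)) := by
    unfold inr Matrix.mulVec dotProduct
    simp
  rw [h1]
  have h2 : n2 (fun j => star (x j)) = n2 x := by
    unfold n2 n2sq
    congr 1
    exact Finset.sum_congr rfl fun j _ => by simp
  calc ‖inr (A i) (fun j => star (x j))‖ ≤ n2 (A i) * n2 (fun j => star (x j)) := norm_inr_le _ _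
  _ = n2 (A i) * n2 x := by rw [h2]

lemma ripBound_const (A : Matrix (Fin m) (Fin N) ℂ) (r : ℕ) (M s : ℕ → ℕ) :
    RIPBound A r M s (1 + ∑ i, n2sq (A i)) := by
  intro x _
  set C : ℝ := ∑ i, n2sq (A i) with hC
  have hC0 : 0 ≤ C := Finset.sum_nonneg fun i _ => n2sq_nonneg _
  have hup : n2sq (A.mulVec x) ≤ C * n2sq x := by
    unfold n2sq
    rw [Finset.sum_mul]
    apply Finset.sum_le_sum
    intro i _
    calc ‖A.mulVec x i‖ ^ 2 ≤ (n2 (A i) * n2 x) ^ 2 := by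
          apply pow_le_pow_left₀ (norm_nonneg _) (mulVec_row_bound A x i)
    _ = n2sq (A i) * n2sq x := by rw [mul_pow, n2_sq, n2_sq]
  constructor
  · calc (1 - (1 + C)) * n2sq x = -(C * n2sq x) := by ring
    _ ≤ 0 := neg_nonpos.2 (mul_nonneg hC0 (n2sq_nonneg x))
    _ ≤ n2sq (A.mulVec x) := n2sq_nonneg _
  · calc n2sq (A.mulVec x) ≤ C * n2sq x := hup
    _ ≤ (1 + (1 + C)) * n2sq x := by nlinarith [n2sq_nonneg x]

lemma ricl_nonneg (A : Matrix (Fin m) (Fin N) ℂ) (r : ℕ) (M s : ℕ → ℕ) :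
    0 ≤ ricl A r M s :=
  Real.sInf_nonneg fun _ hx => hx.1

lemma ricl_rip (A : Matrix (Fin m) (Fin N) ℂ) (r : ℕ) (M s : ℕ → ℕ) :
    RIPBound A r M s (ricl A r M s) := by
  set S : Set ℝ := {δ : ℝ | 0 ≤ δ ∧ RIPBound A r M s δ} with hS
  have hne : S.Nonempty := by
    refine ⟨1 + ∑ i, n2sq (A i), ?_, ripBound_const A r M s⟩
    have : (0:ℝ) ≤ ∑ i, n2sq (A i) := Finset.sum_nonneg fun i _ => n2sq_nonneg _
    linarith
  intro x hx
  have key : ∀ ε > 0, ∃ δ' : ℝ, δ' < ricl A r M s + ε ∧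
      (1 - δ') * n2sq x ≤ n2sq (A.mulVec x) ∧ n2sq (A.mulVec x) ≤ (1 + δ') * n2sq x := by
    intro ε hε
    obtain ⟨δ', hδ'S, hδ'lt⟩ := Real.lt_sInf_add_pos hne hε
    exact ⟨δ', hδ'lt, hδ'S.2 x hx⟩
  constructor
  · apply le_of_forall_eps (t := n2sq x) (n2sq_nonneg x)
    intro ε hε
    obtain ⟨δ', hlt, h1, _⟩ := key ε hε
    nlinarith [n2sq_nonneg x]
  · rw [show (1 + ricl A r M s) * n2sq x = (1 + ricl A r M s) * n2sq x + 0 from (add_zero _).symm]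
    apply le_of_forall_eps (t := n2sq x) (n2sq_nonneg x)
    intro ε hε
    obtain ⟨δ', hlt, _, h2⟩ := key ε hε
    nlinarith [n2sq_nonneg x]

end Ricl
section TopSet
variable {N : ℕ}

/-- Pick an element of maximal absolute value. -/
def topPick (x : Fin N → ℂ) (F : Finset (Fin N)) (h : F.Nonempty) : Fin N :=
  Classical.choose (Finset.exists_max_image F (fun i => ‖x i‖) h)

lemma topPick_mem (x : Fin N → ℂ) (F : Finset (Fin N)) (h : F.Nonempty) :
    topPick x F h ∈ F :=
  (Classical.choose_spec (Finset.exists_max_image F (fun i => ‖x i‖) h)).1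

lemma topPick_max (x : Fin N → ℂ) (F : Finset (Fin N)) (h : F.Nonempty) :
    ∀ a ∈ F, ‖x a‖ ≤ ‖x (topPick x F h)‖ :=
  (Classical.choose_spec (Finset.exists_max_image F (fun i => ‖x i‖) h)).2

/-- Greedy set of (up to) `n` largest entries of `x` inside `F`. -/
def topSet (x : Fin N → ℂ) : ℕ → Finset (Fin N) → Finset (Fin N)
  | 0, _ => ∅
  | (n+1), F =>
    if h : F.Nonempty then
      insert (topPick x F h) (topSet x n (F.erase (topPick x F h)))
    else ∅

lemma topSet_subset (x : Fin N → ℂ) : ∀ (n : ℕ) (F : Finset (Fin N)), topSet x n F ⊆ F := by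
  intro n
  induction n with
  | zero => intro F; simp [topSet]
  | succ n ih =>
    intro F
    rw [topSet]
    split
    · next h =>
      apply Finset.insert_subset (topPick_mem x F h)
      exact (ih _).trans (Finset.erase_subset _ _)
    · exact Finset.empty_subset _

lemma topSet_card (x : Fin N → ℂ) : ∀ (n : ℕ) (F : Finset (Fin N)),
    (topSet x n F).card = min n F.card := by
  intro n
  induction n with
  | zero => intro F; simp [topSet]
  | succ n ih =>
    intro F
    rw [topSet]
    split
    · next h =>
      have hb := topPick_mem x F h
      have hnot : topPick x F h ∉ topSet x n (F.erase (topPick x F h)) := by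
        intro hmem
        exact (Finset.notMem_erase _ _) (topSet_subset x n _ hmem)
      rw [Finset.card_insert_of_notMem hnot, ih, Finset.card_erase_of_mem hb]
      have hpos : 1 ≤ F.card := Finset.card_pos.2 h
      omega
    · next h =>
      have : F.card = 0 := by
        rw [Finset.card_eq_zero]
        exact Finset.not_nonempty_iff_eq_empty.1 h
      simp [this]

lemma topSet_max (x : Fin N → ℂ) : ∀ (n : ℕ) (F : Finset (Fin N)),
    ∀ i ∈ topSet x n F, ∀ j ∈ F \ topSet x n F, ‖x j‖ ≤ ‖x i‖ := by
  intro n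
  induction n with
  | zero => intro F i hi; simp [topSet] at hi
  | succ n ih =>
    intro F i hi j hj
    rw [topSet] at hi hj
    by_cases h : F.Nonempty
    · rw [dif_pos h] at hi hj
      rw [Finset.mem_sdiff] at hj
      rcases Finset.mem_insert.1 hi with rfl | hi'
      · exact topPick_max x F h j hj.1
      · apply ih (F.erase (topPick x F h)) i hi' j
        rw [Finset.mem_sdiff]
        refine ⟨Finset.mem_erase.2 ⟨?_, hj.1⟩, ?_⟩
        · intro hje
          exact hj.2 (by rw [hje]; exact Finset.mem_insert_self _ _)
        · intro hjt
          exact hj.2 (Finset.mem_insert_of_mem hjt)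
    · rw [dif_neg h] at hi
      simp at hi

lemma topSet_empty (x : Fin N → ℂ) (n : ℕ) : topSet x n ∅ = ∅ := by
  cases n with
  | zero => rfl
  | succ n => rw [topSet]; simp

/-- Remaining set after removing `j` greedy blocks of size `c`. -/
def remSet (x : Fin N → ℂ) (c : ℕ) (F : Finset (Fin N)) : ℕ → Finset (Fin N)
  | 0 => F
  | (j+1) => remSet x c F j \ topSet x c (remSet x c F j)

/-- The `j`-th greedy block. -/
def blk (x : Fin N → ℂ) (c : ℕ) (F : Finset (Fin N)) (j : ℕ) : Finset (Fin N) :=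
  topSet x c (remSet x c F j)

lemma blk_subset_rem (x : Fin N → ℂ) (c : ℕ) (F : Finset (Fin N)) (j : ℕ) :
    blk x c F j ⊆ remSet x c F j := topSet_subset x c _

lemma remSet_succ_subset (x : Fin N → ℂ) (c : ℕ) (F : Finset (Fin N)) (j : ℕ) :
    remSet x c F (j+1) ⊆ remSet x c F j := Finset.sdiff_subset

lemma remSet_subset_F (x : Fin N → ℂ) (c : ℕ) (F : Finset (Fin N)) (j : ℕ) :
    remSet x c F j ⊆ F := by
  induction j with
  | zero => intro i hi; exact hi
  | succ j ih => exact (remSet_succ_subset x c F j).trans ih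

lemma remSet_le (x : Fin N → ℂ) (c : ℕ) (F : Finset (Fin N)) {j j' : ℕ} (h : j ≤ j') :
    remSet x c F j' ⊆ remSet x c F j := by
  induction j' with
  | zero =>
    rw [Nat.le_zero.1 h]
  | succ j' ih =>
    rcases Nat.lt_or_ge j (j'+1) with hlt | hge
    · exact (remSet_succ_subset x c F j').trans (ih (Nat.lt_succ_iff.1 hlt))
    · rw [Nat.le_antisymm h hge]

lemma blk_subset_F (x : Fin N → ℂ) (c : ℕ) (F : Finset (Fin N)) (j : ℕ) :
    blk x c F j ⊆ F := (blk_subset_rem x c F j).trans (remSet_subset_F x c F j)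

lemma blk_card_le (x : Fin N → ℂ) (c : ℕ) (F : Finset (Fin N)) (j : ℕ) :
    (blk x c F j).card ≤ c := by
  rw [blk, topSet_card]; omega

lemma blk_disjoint (x : Fin N → ℂ) (c : ℕ) (F : Finset (Fin N)) {j j' : ℕ} (h : j < j') :
    Disjoint (blk x c F j) (blk x c F j') := by
  rw [Finset.disjoint_right]
  intro i hi' hi
  have h1 : i ∈ remSet x c F (j+1) := remSet_le x c F h ((blk_subset_rem x c F j') hi')
  rw [remSet, Finset.mem_sdiff] at h1
  exact h1.2 hi

lemma remSet_card (x : Fin N → ℂ) {c : ℕ} (hc : 1 ≤ c) (F : Finset (Fin N)) (j : ℕ) :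
    (remSet x c F j).card + j ≤ F.card ∨ remSet x c F j = ∅ := by
  induction j with
  | zero => left; simp [remSet]
  | succ j ih =>
    rcases ih with h | h
    · by_cases hne : (remSet x c F (j+1)).Nonempty
      · left
        have hRne : (remSet x c F j).Nonempty := by
          obtain ⟨i, hi⟩ := hne
          exact ⟨i, remSet_succ_subset x c F j hi⟩
        have hcard : (remSet x c F (j+1)).card =
            (remSet x c F j).card - (topSet x c (remSet x c F j)).card := by
          rw [remSet, Finset.card_sdiff_of_subset (topSet_subset x c _)]
        rw [hcard, topSet_card]
        have : 1 ≤ (remSet x c F j).card := Finset.card_pos.2 hRne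
        omega
      · right; exact Finset.not_nonempty_iff_eq_empty.1 hne
    · right; rw [remSet, h]; simp [topSet_empty]

lemma remSet_eventually_empty (x : Fin N → ℂ) {c : ℕ} (hc : 1 ≤ c) (F : Finset (Fin N))
    {j : ℕ} (hj : F.card ≤ j) : remSet x c F j = ∅ := by
  rcases remSet_card x hc F j with h | h
  · rw [← Finset.card_eq_zero]; omega
  · exact h

lemma remSet_eq (x : Fin N → ℂ) (c : ℕ) (F : Finset (Fin N)) (j : ℕ) :
    remSet x c F j = F \ (Finset.range j).biUnion (blk x c F) := by
  induction j with
  | zero => simp [remSet]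
  | succ j ih =>
    rw [remSet, Finset.range_add_one, Finset.biUnion_insert,
      show topSet x c (remSet x c F j) = blk x c F j from rfl, ih]
    ext i
    constructor
    · intro h
      have h1 := Finset.mem_sdiff.1 h
      have h2 := Finset.mem_sdiff.1 h1.1
      refine Finset.mem_sdiff.2 ⟨h2.1, fun hu => ?_⟩
      rcases Finset.mem_union.1 hu with hb | hb
      · exact h1.2 hb
      · exact h2.2 hb
    · intro h
      have h1 := Finset.mem_sdiff.1 h
      refine Finset.mem_sdiff.2 ⟨Finset.mem_sdiff.2 ⟨h1.1,
        fun hb => h1.2 (Finset.mem_union.2 (Or.inr hb))⟩,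
        fun hb => h1.2 (Finset.mem_union.2 (Or.inl hb))⟩

lemma blk_cover (x : Fin N → ℂ) {c : ℕ} (hc : 1 ≤ c) (F : Finset (Fin N))
    {J : ℕ} (hJ : F.card ≤ J) : (Finset.range J).biUnion (blk x c F) = F := by
  have h1 := remSet_eq x c F J
  rw [remSet_eventually_empty x hc F hJ] at h1
  have h2 : (Finset.range J).biUnion (blk x c F) ⊆ F :=
    Finset.biUnion_subset.2 fun j _ => blk_subset_F x c F j
  apply Finset.Subset.antisymm h2
  intro i hi
  by_contra hnot
  have hmem : i ∈ F \ (Finset.range J).biUnion (blk x c F) := Finset.mem_sdiff.2 ⟨hi, hnot⟩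
  rw [← h1] at hmem
  simp at hmem

lemma blk_sorted (x : Fin N → ℂ) (c : ℕ) (F : Finset (Fin N)) (j : ℕ) :
    ∀ i ∈ blk x c F (j+1), ∀ i' ∈ blk x c F j, ‖x i‖ ≤ ‖x i'‖ := by
  intro i hi i' hi'
  apply topSet_max x c (remSet x c F j) i' hi' i
  rw [Finset.mem_sdiff]
  have h1 : i ∈ remSet x c F (j+1) := blk_subset_rem x c F (j+1) hi
  rw [remSet, Finset.mem_sdiff] at h1
  exact h1

lemma blk_full (x : Fin N → ℂ) (c : ℕ) (F : Finset (Fin N)) (j : ℕ)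
    (h : (blk x c F (j+1)).Nonempty) : (blk x c F j).card = c := by
  have h1 : (remSet x c F (j+1)).Nonempty := by
    obtain ⟨i, hi⟩ := h
    exact ⟨i, blk_subset_rem x c F (j+1) hi⟩
  rw [remSet] at h1
  obtain ⟨i, hi⟩ := h1
  rw [Finset.mem_sdiff] at hi
  have hlt : (blk x c F j).card < (remSet x c F j).card := by
    apply Finset.card_lt_card
    rw [Finset.ssubset_iff_of_subset (blk_subset_rem x c F j)]
    exact ⟨i, hi.1, hi.2⟩
  rw [blk, topSet_card] at *
  omega

end TopSet
section Levels
variable {N r : ℕ} {M : ℕ → ℕ}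

lemma levels_mono (hM : LevelsOK N r M) : ∀ {a b : ℕ}, a ≤ b → b ≤ r → M a ≤ M b := by
  intro a b hab hbr
  induction b with
  | zero => rw [Nat.le_zero.1 hab]
  | succ b ih =>
    rcases Nat.lt_or_ge a (b+1) with h | h
    · have h1 : M a ≤ M b := ih (Nat.lt_succ_iff.1 h) (by omega)
      have h2 : M b < M (b+1) := hM.2.2 b (by omega)
      omega
    · rw [Nat.le_antisymm hab h]

lemma level_disjoint (hM : LevelsOK N r M) {k k' : ℕ} (hk : k < r) (hk' : k' < r)
    (hne : k ≠ k') : Disjoint (level N M k) (level N M k') := by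
  rw [Finset.disjoint_left]
  intro i hi hi'
  rw [level, Finset.mem_filter] at hi hi'
  have h1 := hi.2
  have h2 := hi'.2
  rcases Nat.lt_or_ge k k' with h | h
  · have : M (k+1) ≤ M k' := levels_mono hM (by omega) (by omega)
    omega
  · have hlt : k' < k := by omega
    have : M (k'+1) ≤ M k := levels_mono hM (by omega) (by omega)
    omega

lemma exists_level (hM : LevelsOK N r M) (hr : 0 < r) (i : Fin N) :
    ∃ k, k < r ∧ i ∈ level N M k := by
  classical
  set P : ℕ → Prop := fun k => M k ≤ (i : ℕ) with hP
  have hP0 : P 0 := by rw [hP]; simp [hM.1]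
  set k₀ := Nat.findGreatest P r with hk₀
  have hle : k₀ ≤ r := Nat.findGreatest_le r
  have hspec : P k₀ := Nat.findGreatest_spec (Nat.zero_le r) hP0
  have hkr : k₀ ≠ r := by
    intro h
    have h2 : M r ≤ (i : ℕ) := by rw [← h]; exact hspec
    rw [hM.2.1] at h2
    exact absurd h2 (by omega)
  have hk1 : ¬ P (k₀ + 1) := Nat.findGreatest_is_greatest (Nat.lt_succ_self k₀) (by omega)
  refine ⟨k₀, by omega, Finset.mem_filter.2 ⟨Finset.mem_univ _, hspec, ?_⟩⟩
  rw [hP] at hk1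
  omega

lemma sum_levels (hM : LevelsOK N r M) (hr : 0 < r) (f : Fin N → ℝ) (S : Finset (Fin N)) :
    ∑ i ∈ S, f i = ∑ k ∈ Finset.range r, ∑ i ∈ S ∩ level N M k, f i := by
  have hdisj : (↑(Finset.range r) : Set ℕ).PairwiseDisjoint (fun k => S ∩ level N M k) := by
    intro a ha b hb hab
    simp only [Finset.coe_range, Set.mem_Iio] at ha hb
    exact (level_disjoint hM ha hb hab).mono Finset.inter_subset_right Finset.inter_subset_right
  rw [← Finset.sum_biUnion hdisj]
  congr 1
  ext i
  simp only [Finset.mem_biUnion, Finset.mem_range, Finset.mem_inter]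
  constructor
  · intro hi
    obtain ⟨k, hk, hik⟩ := exists_level hM hr i
    exact ⟨k, hk, hi, hik⟩
  · rintro ⟨k, _, hiS, _⟩
    exact hiS

end Levels
section Aux4
variable {N : ℕ} {ι κ : Type*} [Fintype ι]

lemma inr_sum_right' (x : ι → ℂ) (E : Finset κ) (y : κ → ι → ℂ) :
    inr x (∑ j ∈ E, y j) = ∑ j ∈ E, inr x (y j) := by
  unfold inr
  have h1 : ∀ i, (∑ j ∈ E, y j) i = ∑ j ∈ E, y j i := fun i => Finset.sum_apply i E y
  simp only [h1, star_sum, Finset.mul_sum]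
  exact Finset.sum_comm

lemma n2sq_proj (S : Finset (Fin N)) (x : Fin N → ℂ) :
    n2sq (proj S x) = ∑ i ∈ S, ‖x i‖ ^ 2 := by
  unfold n2sq proj
  have h : ∀ i, ‖(if i ∈ S then x i else 0)‖ ^ 2 = if i ∈ S then ‖x i‖ ^ 2 else 0 := by
    intro i; split <;> simp
  simp only [h]
  rw [Finset.sum_ite_mem, Finset.univ_inter]

lemma wn1_proj (wv : Fin N → ℝ) (S : Finset (Fin N)) (x : Fin N → ℂ) :
    wn1 wv (proj S x) = ∑ i ∈ S, wv i * ‖x i‖ := by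
  unfold wn1 proj
  have h : ∀ i, wv i * ‖(if i ∈ S then x i else 0)‖ = if i ∈ S then wv i * ‖x i‖ else 0 := by
    intro i; split <;> simp
  simp only [h]
  rw [Finset.sum_ite_mem, Finset.univ_inter]

lemma proj_union_add {S T : Finset (Fin N)} (h : Disjoint S T) (x : Fin N → ℂ) :
    proj (S ∪ T) x = proj S x + proj T x := by
  funext i
  simp only [proj, Pi.add_apply, Finset.mem_union]
  by_cases hS : i ∈ S
  · have hT : i ∉ T := Finset.disjoint_left.1 h hS
    simp [hS, hT]
  · by_cases hT : i ∈ T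
    · simp [hS, hT]
    · simp [hS, hT]

end Aux4

section Dsets
variable {N r : ℕ} {M s : ℕ → ℕ}

/-- The j-th block across all levels. -/
def Dset (N r : ℕ) (M s : ℕ → ℕ) (Δ : Finset (Fin N)) (x : Fin N → ℂ) (j : ℕ) :
    Finset (Fin N) :=
  (Finset.range r).biUnion fun k => blk x (s k) (level N M k \ Δ) j

lemma blk_level_subset (Δ : Finset (Fin N)) (x : Fin N → ℂ) (k j : ℕ) :
    blk x (s k) (level N M k \ Δ) j ⊆ level N M k :=
  (blk_subset_F x _ _ j).trans Finset.sdiff_subset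

lemma blk_disj_Δ (Δ : Finset (Fin N)) (x : Fin N → ℂ) (k j : ℕ) :
    Disjoint (blk x (s k) (level N M k \ Δ) j) Δ := by
  rw [Finset.disjoint_left]
  intro i hi hiΔ
  have h1 := blk_subset_F x (s k) (level N M k \ Δ) j hi
  exact (Finset.mem_sdiff.1 h1).2 hiΔ

lemma Dset_level (hM : LevelsOK N r M) (Δ : Finset (Fin N)) (x : Fin N → ℂ)
    {k : ℕ} (hk : k < r) (j : ℕ) :
    Dset N r M s Δ x j ∩ level N M k = blk x (s k) (level N M k \ Δ) j := by
  ext i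
  simp only [Dset, Finset.mem_inter, Finset.mem_biUnion, Finset.mem_range]
  constructor
  · rintro ⟨⟨k', hk', hik'⟩, hil⟩
    rcases eq_or_ne k' k with rfl | hne
    · exact hik'
    · exact absurd hil fun hl =>
        (Finset.disjoint_left.1 (level_disjoint hM hk' hk hne)) (blk_level_subset Δ x k' j hik') hl
  · intro hib
    exact ⟨⟨k, hk, hib⟩, blk_level_subset Δ x k j hib⟩

lemma Dset_sparse (hM : LevelsOK N r M) (Δ : Finset (Fin N)) (x : Fin N → ℂ) (j : ℕ) :
    SparseSet N r M s (Dset N r M s Δ x j) := by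
  intro k hk
  rw [Dset_level hM Δ x hk j]
  exact blk_card_le x (s k) _ j

lemma Dset_disj_Δ (Δ : Finset (Fin N)) (x : Fin N → ℂ) (j : ℕ) :
    Disjoint Δ (Dset N r M s Δ x j) := by
  rw [Finset.disjoint_right]
  intro i hi
  simp only [Dset, Finset.mem_biUnion, Finset.mem_range] at hi
  obtain ⟨k, hk, hik⟩ := hi
  exact Finset.disjoint_left.1 (blk_disj_Δ Δ x k j) hik

lemma Dset_disj (hM : LevelsOK N r M) (Δ : Finset (Fin N)) (x : Fin N → ℂ)
    {j j' : ℕ} (hne : j ≠ j') :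
    Disjoint (Dset N r M s Δ x j) (Dset N r M s Δ x j') := by
  rw [Finset.disjoint_left]
  intro i hi hi'
  simp only [Dset, Finset.mem_biUnion, Finset.mem_range] at hi hi'
  obtain ⟨k, hk, hik⟩ := hi
  obtain ⟨k', hk', hik'⟩ := hi'
  rcases eq_or_ne k k' with rfl | hkk
  · rcases Nat.lt_or_ge j j' with h | h
    · exact (Finset.disjoint_left.1 (blk_disjoint x (s k) _ h)) hik hik'
    · have h2 : j' < j := by omega
      exact (Finset.disjoint_left.1 (blk_disjoint x (s k) _ h2)) hik' hik
  · exact (Finset.disjoint_left.1 (level_disjoint hM hk hk' hkk))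
      (blk_level_subset Δ x k j hik) (blk_level_subset Δ x k' j' hik')

lemma Dset_cover (hM : LevelsOK N r M) (hr : 0 < r) (hs : ∀ k < r, 1 ≤ s k)
    (Δ : Finset (Fin N)) (x : Fin N → ℂ) :
    Finset.univ \ Δ = (Finset.range (N + 1)).biUnion (Dset N r M s Δ x) := by
  ext i
  simp only [Finset.mem_sdiff, Finset.mem_univ, true_and, Finset.mem_biUnion, Finset.mem_range]
  constructor
  · intro hiΔ
    obtain ⟨k, hk, hik⟩ := exists_level hM hr i
    have hiF : i ∈ level N M k \ Δ := Finset.mem_sdiff.2 ⟨hik, hiΔ⟩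
    have hcard : (level N M k \ Δ).card ≤ N + 1 := by
      have h1 := Finset.card_le_univ (level N M k \ Δ)
      simp only [Finset.card_univ, Fintype.card_fin] at h1
      omega
    rw [← blk_cover x (hs k hk) (level N M k \ Δ) hcard] at hiF
    simp only [Finset.mem_biUnion, Finset.mem_range] at hiF
    obtain ⟨j, hj, hij⟩ := hiF
    refine ⟨j, hj, ?_⟩
    simp only [Dset, Finset.mem_biUnion, Finset.mem_range]
    exact ⟨k, hk, hij⟩
  · rintro ⟨j, hj, hij⟩
    exact Finset.disjoint_right.1 (Dset_disj_Δ Δ x j) hij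

end Dsets
section XiZeta
variable {r : ℕ} {s : ℕ → ℕ} {wl : ℕ → ℝ}

lemma xiMin_pos (hr : 0 < r) (hs : ∀ k < r, 1 ≤ s k) (hwpos : ∀ k < r, 0 < wl k) :
    0 < xiMin r s wl := by
  have hrne : (Finset.range r).Nonempty := ⟨0, Finset.mem_range.2 hr⟩
  rw [xiMin, dif_pos hrne, Finset.lt_inf'_iff]
  intro k hk
  have h1 := hwpos k (Finset.mem_range.1 hk)
  have h2 : (1 : ℝ) ≤ (s k : ℝ) := by exact_mod_cast hs k (Finset.mem_range.1 hk)
  nlinarith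

lemma xiMin_le (hk : ∀ k < r, True) {k : ℕ} (hkr : k < r) :
    xiMin r s wl ≤ wl k ^ 2 * (s k : ℝ) := by
  have hrne : (Finset.range r).Nonempty := ⟨k, Finset.mem_range.2 hkr⟩
  rw [xiMin, dif_pos hrne]
  exact Finset.inf'_le _ (Finset.mem_range.2 hkr)

lemma xiMin_le_zeta (hr : 0 < r) (hwpos : ∀ k < r, 0 < wl k) :
    xiMin r s wl ≤ zeta r s wl := by
  have hrne : (Finset.range r).Nonempty := ⟨0, Finset.mem_range.2 hr⟩
  rw [xiMin, dif_pos hrne, zeta]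
  calc (Finset.range r).inf' hrne (fun k => wl k ^ 2 * (s k : ℝ)) ≤ wl 0 ^ 2 * (s 0 : ℝ) :=
      Finset.inf'_le _ (Finset.mem_range.2 hr)
  _ ≤ ∑ k ∈ Finset.range r, wl k ^ 2 * (s k : ℝ) :=
      Finset.single_le_sum (f := fun k => wl k ^ 2 * (s k : ℝ))
        (fun k _ => by positivity) (Finset.mem_range.2 hr)

end XiZeta

section BlockBound
variable {N r : ℕ} {M s : ℕ → ℕ}

lemma blk_sq_bound (hs : ∀ k < r, 1 ≤ s k) {wl : ℕ → ℝ} (hwpos : ∀ k < r, 0 < wl k)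
    {w : Fin N → ℝ} (hw : ∀ k < r, ∀ i ∈ level N M k, w i = wl k)
    (hξpos : 0 < xiMin r s wl)
    (Δ : Finset (Fin N)) (x : Fin N → ℂ) {k : ℕ} (hk : k < r) (j : ℕ) :
    ∑ i ∈ blk x (s k) (level N M k \ Δ) (j + 1), ‖x i‖ ^ 2 ≤
      (∑ i ∈ blk x (s k) (level N M k \ Δ) j, w i * ‖x i‖) ^ 2 / xiMin r s wl := by
  set F := level N M k \ Δ with hF
  by_cases hbe : (blk x (s k) F (j + 1)).Nonempty
  · have hfull : (blk x (s k) F j).card = s k := blk_full x (s k) F j hbe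
    have hBne : (blk x (s k) F j).Nonempty := by
      rw [← Finset.card_pos, hfull]; exact hs k hk
    set m' := (blk x (s k) F j).inf' hBne (fun i => ‖x i‖) with hm'
    have hm'nn : 0 ≤ m' := by
      obtain ⟨i0, hi0, he⟩ := Finset.exists_mem_eq_inf' hBne (fun i => ‖x i‖)
      rw [hm', he]
      exact norm_nonneg _
    have hle1 : ∀ i ∈ blk x (s k) F (j + 1), ‖x i‖ ≤ m' := by
      intro i hi
      apply Finset.le_inf'
      intro i' hi'
      exact blk_sorted x (s k) F j i hi i' hi'
    have hskpos : (0 : ℝ) < (s k : ℝ) := by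
      have := hs k hk; exact_mod_cast Nat.lt_of_lt_of_le Nat.zero_lt_one this
    have hsum1 : ∑ i ∈ blk x (s k) F (j + 1), ‖x i‖ ^ 2 ≤ (s k : ℝ) * m' ^ 2 := by
      calc ∑ i ∈ blk x (s k) F (j + 1), ‖x i‖ ^ 2 ≤ ∑ _i ∈ blk x (s k) F (j + 1), m' ^ 2 :=
            Finset.sum_le_sum (fun i hi => by nlinarith [hle1 i hi, norm_nonneg (x i)])
      _ = ((blk x (s k) F (j + 1)).card : ℝ) * m' ^ 2 := by
            rw [Finset.sum_const, nsmul_eq_mul]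
      _ ≤ (s k : ℝ) * m' ^ 2 := by
            have h1 : ((blk x (s k) F (j + 1)).card : ℝ) ≤ (s k : ℝ) := by
              exact_mod_cast blk_card_le x (s k) F (j + 1)
            nlinarith [sq_nonneg m']
    have hsum2 : (s k : ℝ) * m' ≤ ∑ i ∈ blk x (s k) F j, ‖x i‖ := by
      have h1 := Finset.card_nsmul_le_sum (blk x (s k) F j) (fun i => ‖x i‖) m'
        (fun i hi => Finset.inf'_le _ hi)
      rw [hfull, nsmul_eq_mul] at h1
      exact h1
    have hsnn : (0 : ℝ) ≤ ∑ i ∈ blk x (s k) F j, ‖x i‖ :=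
      Finset.sum_nonneg fun i _ => norm_nonneg _
    have hstep : (s k : ℝ) * m' ^ 2 ≤ (∑ i ∈ blk x (s k) F j, ‖x i‖) ^ 2 / (s k : ℝ) := by
      rw [le_div_iff₀ hskpos]
      nlinarith [mul_le_mul hsum2 hsum2 (mul_nonneg hskpos.le hm'nn) hsnn]
    have hgw : ∀ i ∈ blk x (s k) F j, w i * ‖x i‖ = wl k * ‖x i‖ := by
      intro i hi
      rw [hw k hk i (blk_level_subset Δ x k j hi)]
    have hWkval : ∑ i ∈ blk x (s k) F j, w i * ‖x i‖ = wl k * ∑ i ∈ blk x (s k) F j, ‖x i‖ := by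
      rw [Finset.sum_congr rfl hgw, ← Finset.mul_sum]
    have hwlpos := hwpos k hk
    have hξle : xiMin r s wl ≤ wl k ^ 2 * (s k : ℝ) := xiMin_le (fun _ _ => trivial) hk
    have hfin : (∑ i ∈ blk x (s k) F j, ‖x i‖) ^ 2 / (s k : ℝ) =
        (∑ i ∈ blk x (s k) F j, w i * ‖x i‖) ^ 2 / (wl k ^ 2 * (s k : ℝ)) := by
      have h1 : (s k : ℝ) ≠ 0 := ne_of_gt hskpos
      have h2 : wl k ≠ 0 := ne_of_gt hwlpos
      rw [hWkval, mul_pow]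
      field_simp
    have hfin2 : (∑ i ∈ blk x (s k) F j, w i * ‖x i‖) ^ 2 / (wl k ^ 2 * (s k : ℝ)) ≤
        (∑ i ∈ blk x (s k) F j, w i * ‖x i‖) ^ 2 / xiMin r s wl :=
      div_le_div_of_nonneg_left (sq_nonneg _) hξpos hξle
    calc ∑ i ∈ blk x (s k) F (j + 1), ‖x i‖ ^ 2 ≤ (s k : ℝ) * m' ^ 2 := hsum1
    _ ≤ (∑ i ∈ blk x (s k) F j, ‖x i‖) ^ 2 / (s k : ℝ) := hstep
    _ = (∑ i ∈ blk x (s k) F j, w i * ‖x i‖) ^ 2 / (wl k ^ 2 * (s k : ℝ)) := hfin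
    _ ≤ _ := hfin2
  · have h0 : blk x (s k) F (j + 1) = ∅ := Finset.not_nonempty_iff_eq_empty.1 hbe
    rw [h0]
    simp only [Finset.sum_empty]
    positivity

end BlockBound
/-- RIPL implies weighted robust null space property in levels: if
`δ = δ_{2s,M} < 1/(√(2ζ/ξ) + 1)`, then with `ρ = √2 (δ/(1−δ)) √(ζ/ξ) < 1` and
`γ = √(1+δ)/(1−δ) > 0`, for all `x` and every `(s,M)`-sparse set `Δ`:
`‖P_Δ x‖₂ ≤ ρ ‖P_{Δᶜ} x‖_{ℓ¹_w}/√ζ + γ ‖Ax‖₂`. -/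
theorem stmt16 {m N : ℕ} (r : ℕ) (M s : ℕ → ℕ) (hM : LevelsOK N r M) (hr : 0 < r)
    (hs : ∀ k < r, 1 ≤ s k)
    (w : Fin N → ℝ) (wl : ℕ → ℝ) (hwpos : ∀ k < r, 0 < wl k)
    (hw : ∀ k < r, ∀ i ∈ level N M k, w i = wl k)
    (A : Matrix (Fin m) (Fin N) ℂ)
    (hA : ricl A r M (fun k => 2 * s k) <
      1 / (Real.sqrt (2 * zeta r s wl / xiMin r s wl) + 1)) :
    Real.sqrt 2 * (ricl A r M (fun k => 2 * s k) / (1 - ricl A r M (fun k => 2 * s k))) *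
        Real.sqrt (zeta r s wl / xiMin r s wl) < 1 ∧
    0 < Real.sqrt (1 + ricl A r M (fun k => 2 * s k)) /
        (1 - ricl A r M (fun k => 2 * s k)) ∧
    ∀ (x : Fin N → ℂ) (Δ : Finset (Fin N)), SparseSet N r M s Δ →
      n2 (proj Δ x) ≤
        Real.sqrt 2 * (ricl A r M (fun k => 2 * s k) /
            (1 - ricl A r M (fun k => 2 * s k))) *
            Real.sqrt (zeta r s wl / xiMin r s wl) *
            (wn1 w (proj (Finset.univ \ Δ) x) / Real.sqrt (zeta r s wl)) +
          Real.sqrt (1 + ricl A r M (fun k => 2 * s k)) /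
              (1 - ricl A r M (fun k => 2 * s k)) *
            n2 (A.mulVec x) := by
  set δ := ricl A r M (fun k => 2 * s k) with hδdef
  have hδ0 : 0 ≤ δ := ricl_nonneg A r M _
  have hRIP : RIPBound A r M (fun k => 2 * s k) δ := ricl_rip A r M _
  set ζ := zeta r s wl with hζdef
  set ξ := xiMin r s wl with hξdef
  have hξpos : 0 < ξ := xiMin_pos hr hs hwpos
  have hζpos : 0 < ζ := lt_of_lt_of_le hξpos (xiMin_le_zeta hr hwpos)
  have hsplit : Real.sqrt (ζ / ξ) = Real.sqrt ζ / Real.sqrt ξ :=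
    Real.sqrt_div (le_of_lt hζpos) ξ
  have hs2 : Real.sqrt (2 * ζ / ξ) = Real.sqrt 2 * Real.sqrt (ζ / ξ) := by
    rw [mul_div_assoc, Real.sqrt_mul (by norm_num : (0:ℝ) ≤ 2)]
  have hApos : 0 < Real.sqrt (2 * ζ / ξ) + 1 := by positivity
  rw [lt_div_iff₀ hApos] at hA
  have key : Real.sqrt 2 * δ * Real.sqrt (ζ / ξ) + δ < 1 := by
    rw [hs2] at hA
    nlinarith
  have hδ1 : δ < 1 := by
    nlinarith [mul_nonneg (mul_nonneg (Real.sqrt_nonneg 2) hδ0) (Real.sqrt_nonneg (ζ / ξ))]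
  have h1δ : 0 < 1 - δ := by linarith
  have hsqζ : 0 < Real.sqrt ζ := Real.sqrt_pos.2 hζpos
  have hsqξ : 0 < Real.sqrt ξ := Real.sqrt_pos.2 hξpos
  have hρlt : Real.sqrt 2 * (δ / (1 - δ)) * Real.sqrt (ζ / ξ) < 1 := by
    have he : Real.sqrt 2 * (δ / (1 - δ)) * Real.sqrt (ζ / ξ)
        = (Real.sqrt 2 * δ * Real.sqrt (ζ / ξ)) / (1 - δ) := by ring
    rw [he, div_lt_one h1δ]
    linarith
  refine ⟨hρlt, div_pos (Real.sqrt_pos.2 (by linarith)) h1δ, ?_⟩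
  intro x Δ hΔ
  -- setup
  have hwnn : ∀ i : Fin N, 0 ≤ w i := by
    intro i
    obtain ⟨k, hk, hik⟩ := exists_level hM hr i
    rw [hw k hk i hik]
    exact le_of_lt (hwpos k hk)
  set J : ℕ := N + 1 with hJ
  set D : ℕ → Finset (Fin N) := Dset N r M s Δ x with hD
  set p : ℕ → Fin N → ℂ := fun j => proj (D j) x with hp
  set v : Fin N → ℂ := proj Δ x with hv
  have hDsp : ∀ j, SparseSet N r M s (D j) := fun j => Dset_sparse hM Δ x j
  have hDΔ : ∀ j, Disjoint Δ (D j) := fun j => Dset_disj_Δ Δ x j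
  have hDdisj : ∀ {j j' : ℕ}, j ≠ j' → Disjoint (D j) (D j') :=
    fun hne => Dset_disj hM Δ x hne
  have hcover : Finset.univ \ Δ = (Finset.range J).biUnion D := Dset_cover hM hr hs Δ x
  -- decomposition of x
  have hdecomp : x = v + ∑ j ∈ Finset.range J, p j := by
    funext i
    simp only [Pi.add_apply, Finset.sum_apply]
    by_cases hiΔ : i ∈ Δ
    · have hzero : ∀ j ∈ Finset.range J, p j i = 0 := by
        intro j _
        have hnd : i ∉ D j := Finset.disjoint_left.1 (hDΔ j) hiΔ
        simp [hp, proj, hnd]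
      rw [Finset.sum_eq_zero hzero]
      simp [hv, proj, hiΔ]
    · have hiU : i ∈ (Finset.range J).biUnion D := by
        rw [← hcover]
        simp [hiΔ]
      simp only [Finset.mem_biUnion, Finset.mem_range] at hiU
      obtain ⟨j₀, hj₀, hij₀⟩ := hiU
      rw [Finset.sum_eq_single j₀]
      · simp [hv, hp, proj, hiΔ, hij₀]
      · intro j hj hne
        have hnd : i ∉ D j := fun hcontra =>
          (Finset.disjoint_left.1 (hDdisj hne)) hcontra hij₀
        simp [hp, proj, hnd]
      · intro hcontra
        exact absurd (Finset.mem_range.2 hj₀) hcontra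
  set E : Finset ℕ := (Finset.range J).erase 0 with hE
  have h0J : (0 : ℕ) ∈ Finset.range J := Finset.mem_range.2 (by omega)
  set w2 : Fin N → ℂ := proj (Δ ∪ D 0) x with hw2
  have hw2eq : w2 = v + p 0 := proj_union_add (hDΔ 0) x
  have hsuppv : supp v ⊆ Δ := supp_proj_subset _ _
  have hsuppp : ∀ j, supp (p j) ⊆ D j := fun j => supp_proj_subset _ _
  have hw2sparse : Sparse r M (fun k => 2 * s k) w2 := by
    apply sparse_mono (supp_proj_subset _ _)
    intro k hk
    simpa [two_mul] using sparseSet_union hΔ (hDsp 0) k hk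
  have hdecomp2 : x = w2 + ∑ j ∈ E, p j := by
    calc x = v + ∑ j ∈ Finset.range J, p j := hdecomp
    _ = v + (p 0 + ∑ j ∈ E, p j) := by rw [Finset.add_sum_erase _ p h0J]
    _ = (v + p 0) + ∑ j ∈ E, p j := (add_assoc _ _ _).symm
    _ = w2 + ∑ j ∈ E, p j := by rw [hw2eq]
  have hAx : A.mulVec x = A.mulVec w2 + ∑ j ∈ E, A.mulVec (p j) := by
    rw [hdecomp2, Matrix.mulVec_add]
    congr 1
    have h1 := map_sum A.mulVecLin p E
    exact h1
  have hexpand : n2sq (A.mulVec w2) = (inr (A.mulVec w2) (A.mulVec x)).re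
      - ∑ j ∈ E, (inr (A.mulVec w2) (A.mulVec (p j))).re := by
    rw [hAx, inr_add_right, inr_sum_right', Complex.add_re, Complex.re_sum, inr_self_re]
    ring
  -- cross bounds
  have hcross : ∀ j ∈ E, |(inr (A.mulVec w2) (A.mulVec (p j))).re|
      ≤ δ * ((n2 v + n2 (p 0)) * n2 (p j)) := by
    intro j hjE
    have hj0 : j ≠ 0 := Finset.ne_of_mem_erase hjE
    have hAw2 : A.mulVec w2 = A.mulVec v + A.mulVec (p 0) := by
      rw [hw2eq, Matrix.mulVec_add]
    rw [hAw2, inr_add_left, Complex.add_re]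
    have h1 := cross_re_bound hRIP hΔ (hDsp j) (hDΔ j) hsuppv (hsuppp j)
    have h2 := cross_re_bound hRIP (hDsp 0) (hDsp j) (hDdisj (Ne.symm hj0))
      (hsuppp 0) (hsuppp j)
    calc |(inr (A.mulVec v) (A.mulVec (p j))).re + (inr (A.mulVec (p 0)) (A.mulVec (p j))).re|
        ≤ |(inr (A.mulVec v) (A.mulVec (p j))).re| +
          |(inr (A.mulVec (p 0)) (A.mulVec (p j))).re| := abs_add_le _ _
    _ ≤ δ * (n2 v * n2 (p j)) + δ * (n2 (p 0) * n2 (p j)) := add_le_add h1 h2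
    _ = δ * ((n2 v + n2 (p 0)) * n2 (p j)) := by ring
  -- ℓ¹ bound on blocks
  have hVnn : ∀ j, (0:ℝ) ≤ ∑ i ∈ D j, w i * ‖x i‖ :=
    fun j => Finset.sum_nonneg fun i _ => mul_nonneg (hwnn i) (norm_nonneg _)
  have hpn : ∀ j : ℕ, n2 (p (j + 1)) ≤ (∑ i ∈ D j, w i * ‖x i‖) / Real.sqrt ξ := by
    intro j
    have h1 : n2sq (p (j + 1)) =
        ∑ k ∈ Finset.range r, ∑ i ∈ blk x (s k) (level N M k \ Δ) (j + 1), ‖x i‖ ^ 2 := by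
      rw [hp]
      rw [n2sq_proj, sum_levels hM hr (fun i => ‖x i‖ ^ 2) (D (j + 1))]
      apply Finset.sum_congr rfl
      intro k hk
      rw [hD]
      rw [Dset_level hM Δ x (Finset.mem_range.1 hk) (j + 1)]
    have hVk : ∑ i ∈ D j, w i * ‖x i‖ =
        ∑ k ∈ Finset.range r, ∑ i ∈ blk x (s k) (level N M k \ Δ) j, w i * ‖x i‖ := by
      rw [sum_levels hM hr (fun i => w i * ‖x i‖) (D j)]
      apply Finset.sum_congr rfl
      intro k hk
      rw [hD, Dset_level hM Δ x (Finset.mem_range.1 hk) j]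
    have h2 : n2sq (p (j + 1)) ≤ (∑ i ∈ D j, w i * ‖x i‖) ^ 2 / ξ := by
      rw [h1, hVk]
      calc ∑ k ∈ Finset.range r, ∑ i ∈ blk x (s k) (level N M k \ Δ) (j + 1), ‖x i‖ ^ 2
          ≤ ∑ k ∈ Finset.range r,
            (∑ i ∈ blk x (s k) (level N M k \ Δ) j, w i * ‖x i‖) ^ 2 / ξ :=
            Finset.sum_le_sum fun k hk =>
              blk_sq_bound hs hwpos hw hξpos Δ x (Finset.mem_range.1 hk) j
      _ = (∑ k ∈ Finset.range r,
            (∑ i ∈ blk x (s k) (level N M k \ Δ) j, w i * ‖x i‖) ^ 2) / ξ :=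
            (Finset.sum_div _ _ _).symm
      _ ≤ (∑ k ∈ Finset.range r,
            ∑ i ∈ blk x (s k) (level N M k \ Δ) j, w i * ‖x i‖) ^ 2 / ξ := by
            apply div_le_div_of_nonneg_right ?_ hξpos.le
            apply Finset.sum_sq_le_sq_sum_of_nonneg
            intro k hk
            exact Finset.sum_nonneg fun i hi =>
              mul_nonneg (hwnn i) (norm_nonneg _)
    calc n2 (p (j + 1)) = Real.sqrt (n2sq (p (j + 1))) := rfl
    _ ≤ Real.sqrt ((∑ i ∈ D j, w i * ‖x i‖) ^ 2 / ξ) := Real.sqrt_le_sqrt h2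
    _ = (∑ i ∈ D j, w i * ‖x i‖) / Real.sqrt ξ := by
        rw [Real.sqrt_div (sq_nonneg _), Real.sqrt_sq (hVnn j)]
  -- sum over E
  have hEimg : E = Finset.image (fun t => t + 1) (Finset.range N) := by
    ext t
    simp only [hE, hJ, Finset.mem_erase, Finset.mem_range, Finset.mem_image]
    constructor
    · rintro ⟨ht0, htJ⟩
      exact ⟨t - 1, by omega, by omega⟩
    · rintro ⟨a, ha, rfl⟩
      omega
  have hVJ : wn1 w (proj (Finset.univ \ Δ) x) = ∑ j ∈ Finset.range J, ∑ i ∈ D j, w i * ‖x i‖ := by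
    have hDpair : (↑(Finset.range J) : Set ℕ).PairwiseDisjoint D := by
      intro a _ b _ hab
      exact hDdisj hab
    rw [wn1_proj, hcover, Finset.sum_biUnion hDpair]
  have hsigma : ∑ j ∈ E, n2 (p j) ≤ wn1 w (proj (Finset.univ \ Δ) x) / Real.sqrt ξ := by
    rw [hVJ, hEimg, Finset.sum_image (by intro a _ b _ h; simp only at h; omega)]
    calc ∑ t ∈ Finset.range N, n2 (p (t + 1))
        ≤ ∑ t ∈ Finset.range N, (∑ i ∈ D t, w i * ‖x i‖) / Real.sqrt ξ :=
          Finset.sum_le_sum fun t _ => hpn t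
    _ = (∑ t ∈ Finset.range N, ∑ i ∈ D t, w i * ‖x i‖) / Real.sqrt ξ :=
          (Finset.sum_div _ _ _).symm
    _ ≤ (∑ j ∈ Finset.range J, ∑ i ∈ D j, w i * ‖x i‖) / Real.sqrt ξ := by
          apply div_le_div_of_nonneg_right ?_ hsqξ.le
          rw [hJ, Finset.sum_range_succ]
          linarith [hVnn N]
  -- RIP and norm estimates
  have hw2rip := hRIP w2 hw2sparse
  have hABnd : n2 (A.mulVec w2) ≤ Real.sqrt (1 + δ) * n2 w2 := by
    calc n2 (A.mulVec w2) = Real.sqrt (n2sq (A.mulVec w2)) := rfl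
    _ ≤ Real.sqrt ((1 + δ) * n2sq w2) := Real.sqrt_le_sqrt hw2rip.2
    _ = Real.sqrt (1 + δ) * n2 w2 := by
        rw [Real.sqrt_mul (by linarith : (0:ℝ) ≤ 1 + δ)]
        rfl
  have hw2split : n2sq w2 = n2sq v + n2sq (p 0) := by
    rw [hw2eq, n2sq_add_eq, inr_eq_zero_of_disjoint hsuppv (hsuppp 0) (hDΔ 0)]
    simp
  have haux : n2 v + n2 (p 0) ≤ Real.sqrt 2 * n2 w2 := by
    have h1 : (n2 v + n2 (p 0)) ^ 2 ≤ 2 * n2sq w2 := by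
      rw [hw2split]
      nlinarith [n2_sq v, n2_sq (p 0), sq_nonneg (n2 v - n2 (p 0)), n2_nonneg v, n2_nonneg (p 0)]
    have h2 : n2 v + n2 (p 0) ≤ Real.sqrt (2 * n2sq w2) := by
      rw [← Real.sqrt_sq (add_nonneg (n2_nonneg v) (n2_nonneg (p 0)))]
      exact Real.sqrt_le_sqrt h1
    rwa [Real.sqrt_mul (by norm_num : (0:ℝ) ≤ 2)] at h2
  have hsumEnn : (0:ℝ) ≤ ∑ j ∈ E, n2 (p j) := Finset.sum_nonneg fun j _ => n2_nonneg _
  -- core inequality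
  have hcore : (1 - δ) * n2sq w2 ≤ Real.sqrt (1 + δ) * n2 w2 * n2 (A.mulVec x)
      + Real.sqrt 2 * δ * n2 w2 * (∑ j ∈ E, n2 (p j)) := by
    have h1 : (1 - δ) * n2sq w2 ≤ n2sq (A.mulVec w2) := hw2rip.1
    rw [hexpand] at h1
    have h2 : (inr (A.mulVec w2) (A.mulVec x)).re
        ≤ Real.sqrt (1 + δ) * n2 w2 * n2 (A.mulVec x) := by
      calc (inr (A.mulVec w2) (A.mulVec x)).re ≤ ‖inr (A.mulVec w2) (A.mulVec x)‖ :=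
            Complex.re_le_norm _
      _ ≤ n2 (A.mulVec w2) * n2 (A.mulVec x) := norm_inr_le _ _
      _ ≤ Real.sqrt (1 + δ) * n2 w2 * n2 (A.mulVec x) :=
            mul_le_mul_of_nonneg_right hABnd (n2_nonneg _)
    have h3 : - ∑ j ∈ E, (inr (A.mulVec w2) (A.mulVec (p j))).re
        ≤ Real.sqrt 2 * δ * n2 w2 * (∑ j ∈ E, n2 (p j)) := by
      calc - ∑ j ∈ E, (inr (A.mulVec w2) (A.mulVec (p j))).re
          = ∑ j ∈ E, -(inr (A.mulVec w2) (A.mulVec (p j))).re := by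
            rw [← Finset.sum_neg_distrib]
      _ ≤ ∑ j ∈ E, |(inr (A.mulVec w2) (A.mulVec (p j))).re| :=
            Finset.sum_le_sum fun j _ => neg_le_abs _
      _ ≤ ∑ j ∈ E, δ * ((n2 v + n2 (p 0)) * n2 (p j)) :=
            Finset.sum_le_sum fun j hj => hcross j hj
      _ = δ * (n2 v + n2 (p 0)) * ∑ j ∈ E, n2 (p j) := by
            rw [Finset.mul_sum]
            apply Finset.sum_congr rfl
            intro j _
            ring
      _ ≤ Real.sqrt 2 * δ * n2 w2 * (∑ j ∈ E, n2 (p j)) := by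
            apply mul_le_mul_of_nonneg_right ?_ hsumEnn
            calc δ * (n2 v + n2 (p 0)) ≤ δ * (Real.sqrt 2 * n2 w2) :=
                  mul_le_mul_of_nonneg_left haux hδ0
            _ = Real.sqrt 2 * δ * n2 w2 := by ring
    linarith
  -- conclude
  have hLnn : 0 ≤ n2 w2 := n2_nonneg _
  have hvw2 : n2 v ≤ n2 w2 := by
    apply Real.sqrt_le_sqrt
    rw [hw2split]
    linarith [n2sq_nonneg (p 0)]
  have hσnn : 0 ≤ wn1 w (proj (Finset.univ \ Δ) x) / Real.sqrt ξ := le_trans hsumEnn hsigma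
  have hfinal : (1 - δ) * n2 v ≤ Real.sqrt (1 + δ) * n2 (A.mulVec x)
      + Real.sqrt 2 * δ * (wn1 w (proj (Finset.univ \ Δ) x) / Real.sqrt ξ) := by
    rcases eq_or_lt_of_le hLnn with hL0 | hLpos
    · have hv0 : n2 v = 0 := le_antisymm (hL0 ▸ hvw2) (n2_nonneg v)
      rw [hv0, mul_zero]
      apply add_nonneg
      · exact mul_nonneg (Real.sqrt_nonneg _) (n2_nonneg _)
      · exact mul_nonneg (mul_nonneg (Real.sqrt_nonneg 2) hδ0) hσnn
    · have hstep : (1 - δ) * n2sq w2 ≤ Real.sqrt (1 + δ) * n2 w2 * n2 (A.mulVec x)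
          + Real.sqrt 2 * δ * n2 w2 * (wn1 w (proj (Finset.univ \ Δ) x) / Real.sqrt ξ) := by
        calc (1 - δ) * n2sq w2 ≤ Real.sqrt (1 + δ) * n2 w2 * n2 (A.mulVec x)
            + Real.sqrt 2 * δ * n2 w2 * (∑ j ∈ E, n2 (p j)) := hcore
        _ ≤ _ := by
            apply add_le_add (le_refl _)
            apply mul_le_mul_of_nonneg_left hsigma
            exact mul_nonneg (mul_nonneg (Real.sqrt_nonneg 2) hδ0) hLnn
      have hn2sq : n2sq w2 = n2 w2 * n2 w2 := by
        rw [← n2_sq w2]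
        ring
      rw [hn2sq] at hstep
      have hdiv : (1 - δ) * n2 w2 ≤ Real.sqrt (1 + δ) * n2 (A.mulVec x)
          + Real.sqrt 2 * δ * (wn1 w (proj (Finset.univ \ Δ) x) / Real.sqrt ξ) := by
        have h9 : ((1 - δ) * n2 w2) * n2 w2 ≤ (Real.sqrt (1 + δ) * n2 (A.mulVec x)
            + Real.sqrt 2 * δ * (wn1 w (proj (Finset.univ \ Δ) x) / Real.sqrt ξ)) * n2 w2 := by
          calc ((1 - δ) * n2 w2) * n2 w2 = (1 - δ) * (n2 w2 * n2 w2) := by ring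
          _ ≤ Real.sqrt (1 + δ) * n2 w2 * n2 (A.mulVec x)
              + Real.sqrt 2 * δ * n2 w2 * (wn1 w (proj (Finset.univ \ Δ) x) / Real.sqrt ξ) := hstep
          _ = (Real.sqrt (1 + δ) * n2 (A.mulVec x)
              + Real.sqrt 2 * δ * (wn1 w (proj (Finset.univ \ Δ) x) / Real.sqrt ξ)) * n2 w2 := by ring
        exact le_of_mul_le_mul_right h9 hLpos
      calc (1 - δ) * n2 v ≤ (1 - δ) * n2 w2 := mul_le_mul_of_nonneg_left hvw2 (le_of_lt h1δ)
      _ ≤ _ := hdiv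
  have hrhs : Real.sqrt 2 * (δ / (1 - δ)) * Real.sqrt (ζ / ξ) *
        (wn1 w (proj (Finset.univ \ Δ) x) / Real.sqrt ζ) +
      Real.sqrt (1 + δ) / (1 - δ) * n2 (A.mulVec x)
      = (Real.sqrt (1 + δ) * n2 (A.mulVec x)
        + Real.sqrt 2 * δ * (wn1 w (proj (Finset.univ \ Δ) x) / Real.sqrt ξ)) / (1 - δ) := by
    rw [hsplit]
    field_simp
    ring
  rw [hrhs, le_div_iff₀ h1δ]
  calc n2 v * (1 - δ) = (1 - δ) * n2 v := by ring
  _ ≤ _ := hfinal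

end SIL
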